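/- arXiv:2211.01853 — 2 statements merged into one kernel-verified Lean document; each statement's English description precedes it below -/
import Mathlib

section
/- Let u : ℝ → ℝ be a function of bounded variation and δ : ℝ → ℝ a bounded nonnegative measurable function. Then ∫_{ℝ} |u(x + δ(x)) - u(x)| dx ≤ TV(u) · ‖δ‖_∞. -/
/-! The variation function `F x = V(u; 0, x)` is monotone and `|u y - u x| ≤ F y - F x` for
`x ≤ y`, so the integrand is dominated by `F (x + M) - F x`. For monotone `F`, the integral of
`F (· + h) - F` over `[a, b]` telescopes to `∫_b^{b+h} F - ∫_a^{a+h} F ≤ h (F (b + h) - F a)`,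
which is at most `h · TV(u)`. -/

open MeasureTheory Set

namespace Monotone

theorem comp_add_const {F : ℝ → ℝ} (hF : Monotone F) (h : ℝ) : Monotone fun x => F (x + h) :=
  fun _ _ hxy => hF (by linarith)

variable {F : ℝ → ℝ} (hF : Monotone F) {h : ℝ}
include hF

theorem intervalIntegral_sub_comp_add_le (hh : 0 ≤ h) (a b : ℝ) :
    ∫ x in a..b, (F (x + h) - F x) ≤ h * (F (b + h) - F a) := by
  have hint : ∀ p q : ℝ, IntervalIntegrable F volume p q := fun _ _ => hF.intervalIntegrable
  have hshift : ∫ x in a..b, (F (x + h) - F x)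
      = (∫ x in b..b + h, F x) - ∫ x in a..a + h, F x := by
    have hleft := intervalIntegral.integral_add_adjacent_intervals (hint a (a + h)) (hint _ (b + h))
    have hright := intervalIntegral.integral_add_adjacent_intervals (hint a b) (hint b (b + h))
    rw [intervalIntegral.integral_sub (hF.comp_add_const h).intervalIntegrable (hint a b),
      intervalIntegral.integral_comp_add_right F h]
    linarith
  have hupper : ∫ x in b..b + h, F x ≤ h * F (b + h) := by
    simpa using intervalIntegral.integral_mono_on (le_add_of_nonneg_right hh) (hint _ _)
      intervalIntegrable_const fun x hx => hF hx.2
  have hlower : h * F a ≤ ∫ x in a..a + h, F x := by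
    simpa using intervalIntegral.integral_mono_on (le_add_of_nonneg_right hh)
      intervalIntegrable_const (hint _ _) fun x hx => hF hx.1
  rw [hshift]
  linarith

theorem setLIntegral_Icc_ofReal_sub_comp_add_le (hh : 0 ≤ h) {a b : ℝ} (hab : a ≤ b) :
    ∫⁻ x in Icc a b, ENNReal.ofReal (F (x + h) - F x) ≤ ENNReal.ofReal (h * (F (b + h) - F a)) := by
  have hint : IntegrableOn (fun x => F (x + h) - F x) (Icc a b) :=
    ((hF.comp_add_const h).monotoneOn _).integrableOn_isCompact isCompact_Icc
      |>.sub ((hF.monotoneOn _).integrableOn_isCompact isCompact_Icc)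
  rw [← ofReal_integral_eq_lintegral_ofReal hint
    (.of_forall fun x => sub_nonneg.2 (hF (le_add_of_nonneg_right hh))),
    integral_Icc_eq_integral_Ioc, ← intervalIntegral.integral_of_le hab]
  exact ENNReal.ofReal_le_ofReal (hF.intervalIntegral_sub_comp_add_le hh a b)

theorem lintegral_ofReal_sub_comp_add_le (hh : 0 ≤ h) {C : ℝ}
    (hC : ∀ a b, a ≤ b → F b - F a ≤ C) :
    ∫⁻ x, ENNReal.ofReal (F (x + h) - F x) ≤ ENNReal.ofReal (h * C) := by
  rw [← setLIntegral_univ, ← Metric.iUnion_closedBall_nat 0, setLIntegral_iUnion_of_directed _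
    (Monotone.directed_le fun m n hmn => Metric.closedBall_subset_closedBall (by exact_mod_cast hmn))]
  refine iSup_le fun n => ?_
  have hn : (0 : ℝ) - n ≤ 0 + n := by linarith [n.cast_nonneg (α := ℝ)]
  rw [Real.closedBall_eq_Icc]
  refine (hF.setLIntegral_Icc_ofReal_sub_comp_add_le hh hn).trans (ENNReal.ofReal_le_ofReal ?_)
  exact mul_le_mul_of_nonneg_left (hC _ _ (by linarith)) hh

end Monotone

theorem BoundedVariationOn.variationOnFromTo_sub_le {α E : Type*} [LinearOrder α]
    [PseudoEMetricSpace E] {f : α → E} {s : Set α} (hf : BoundedVariationOn f s) {a b c : α}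
    (ha : a ∈ s) (hb : b ∈ s) (hc : c ∈ s) :
    variationOnFromTo f s a c - variationOnFromTo f s a b ≤ (eVariationOn f s).toReal := by
  rw [variationOnFromTo.sub_right hf.locallyBoundedVariationOn ha hc hb]
  exact (le_abs_self _).trans (variationOnFromTo.abs_le_eVariationOn hf)

theorem bv_shift_estimate_general (u : ℝ → ℝ) (δ : ℝ → ℝ) (M : ℝ)
    (hbv : BoundedVariationOn u Set.univ)
    (hδ0 : ∀ x, 0 ≤ δ x) (hδM : ∀ x, δ x ≤ M) :
    ∫⁻ x, ENNReal.ofReal |u (x + δ x) - u x| ≤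
      eVariationOn u Set.univ * ENNReal.ofReal M := by
  have hM : 0 ≤ M := (hδ0 0).trans (hδM 0)
  have hlbv := hbv.locallyBoundedVariationOn
  set F := variationOnFromTo u univ 0
  have hF : Monotone F := fun a b hab =>
    variationOnFromTo.monotoneOn hlbv (mem_univ 0) (mem_univ a) (mem_univ b) hab
  have hpointwise : ∀ x, |u (x + δ x) - u x| ≤ F (x + M) - F x := fun x =>
    (variationOnFromTo.abs_sub_le_sub_of_le hlbv (mem_univ 0) (mem_univ _) (mem_univ _)
      (le_add_of_nonneg_right (hδ0 x))).trans
      (sub_le_sub_right (hF (by linarith [hδM x])) _)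
  calc ∫⁻ x, ENNReal.ofReal |u (x + δ x) - u x|
      ≤ ∫⁻ x, ENNReal.ofReal (F (x + M) - F x) :=
        lintegral_mono fun x => ENNReal.ofReal_le_ofReal (hpointwise x)
    _ ≤ ENNReal.ofReal (M * (eVariationOn u univ).toReal) :=
        hF.lintegral_ofReal_sub_comp_add_le hM fun a b _ =>
          hbv.variationOnFromTo_sub_le (mem_univ 0) (mem_univ a) (mem_univ b)
    _ = eVariationOn u univ * ENNReal.ofReal M := by
        rw [ENNReal.ofReal_mul hM, ENNReal.ofReal_toReal hbv, mul_comm]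

/-- For `u ∈ BV(ℝ;ℝ)` and `δ ∈ L∞(ℝ;ℝ₊)` with `0 ≤ δ ≤ M`,
`∫ |u(x+δ(x)) - u(x)| dx ≤ TV(u)·‖δ‖_∞`. -/
theorem bv_shift_estimate (u : ℝ → ℝ) (δ : ℝ → ℝ) (M : ℝ)
    (hu : Integrable u) (hbv : BoundedVariationOn u Set.univ)
    (hδmeas : Measurable δ) (hδ0 : ∀ x, 0 ≤ δ x) (hδM : ∀ x, δ x ≤ M) :
    ∫⁻ x, ENNReal.ofReal |u (x + δ x) - u x| ≤
      eVariationOn u Set.univ * ENNReal.ofReal M :=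
  bv_shift_estimate_general u δ M hbv hδ0 hδM
end

section
/- Assume u' = f(t,u) where f is measurable in t, locally Lipschitz in u, and for every R > 0 the bound sup{‖f(t,u)‖ : t ≥ 0, ‖u‖ ≤ R} = F_∞(R) satisfies limsup_{R→∞} F_∞(R)/(R ln R) < ∞. Then every solution of the Cauchy problem u' = f(t,u), u(t₀) = u₀ extends to a global solution on [t₀, ∞). -/
/-! Truncating `f` outside a ball of radius `R` gives a bounded, globally Lipschitz Carathéodory
field, whose Picard iterates converge to a solution. On the ball of radius `R ≥ R₀` the growth
bound `‖f(t,u)‖ ≤ C R log R` makes the truncated field grow at most linearly, at rate `C log R`.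
For `R = (‖u₁‖ + R₀)²`, over a time `1 / (2C)` the exponential envelope of the solution from `u₁`
grows by the factor `exp (C log R / (2C)) = ‖u₁‖ + R₀`, so the solution stays in the ball and
solves the original equation. Since this step length does not depend on the initial datum, the
local solutions glue to a global one. -/

open MeasureTheory intervalIntegral Filter Set Topology
open scoped NNReal

section RadialRetraction

variable {E : Type*} [NormedAddCommGroup E] [NormedSpace ℝ E] {R : ℝ}

noncomputable def radialRetraction (R : ℝ) (x : E) : E := (R / max R ‖x‖) • x

theorem norm_radialRetraction (hR : 0 < R) (x : E) : ‖radialRetraction R x‖ = min R ‖x‖ := by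
  have hmax : 0 < max R ‖x‖ := hR.trans_le (le_max_left _ _)
  rw [radialRetraction, norm_smul, Real.norm_of_nonneg (by positivity)]
  rcases le_total ‖x‖ R with h | h
  · rw [max_eq_left h, min_eq_right h, div_self hR.ne', one_mul]
  · rw [max_eq_right h, min_eq_left h, div_mul_cancel₀ _ (hR.trans_le h).ne']

theorem radialRetraction_mem_closedBall (hR : 0 < R) (x : E) :
    radialRetraction R x ∈ Metric.closedBall 0 R := by
  simp [norm_radialRetraction hR]

theorem norm_radialRetraction_le (hR : 0 < R) (x : E) : ‖radialRetraction R x‖ ≤ ‖x‖ :=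
  (norm_radialRetraction hR x).trans_le (min_le_right _ _)

theorem radialRetraction_of_norm_le (hR : 0 < R) {x : E} (h : ‖x‖ ≤ R) :
    radialRetraction R x = x := by
  rw [radialRetraction, max_eq_left h, div_self hR.ne', one_smul]

theorem lipschitzWith_radialRetraction (hR : 0 < R) :
    LipschitzWith 2 (radialRetraction (E := E) R) := by
  refine LipschitzWith.of_dist_le_mul fun x y => ?_
  rw [dist_eq_norm, dist_eq_norm, NNReal.coe_ofNat]
  set a := max R ‖x‖
  set b := max R ‖y‖
  have ha : 0 < a := hR.trans_le (le_max_left _ _)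
  have hb : 0 < b := hR.trans_le (le_max_left _ _)
  have hba : |b - a| ≤ ‖x - y‖ :=
    calc |b - a| ≤ |‖y‖ - ‖x‖| := by
          simpa only [b, a, max_comm R] using abs_max_sub_max_le_abs ‖y‖ ‖x‖ R
      _ ≤ ‖x - y‖ := by rw [abs_sub_comm]; exact abs_norm_sub_norm_le x y
  have hscale : |R / a - R / b| * ‖y‖ ≤ ‖x - y‖ := by
    have : R / a - R / b = R * (b - a) / (a * b) := by field_simp
    rw [this, abs_div, abs_mul, abs_of_pos hR, abs_of_pos (mul_pos ha hb), div_mul_eq_mul_div,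
      div_le_iff₀ (mul_pos ha hb)]
    calc R * |b - a| * ‖y‖ ≤ a * ‖x - y‖ * b := by
          gcongr
          exacts [le_max_left _ _, le_max_right _ _]
      _ = ‖x - y‖ * (a * b) := by ring
  have hshrink : ‖(R / a) • (x - y)‖ ≤ ‖x - y‖ := by
    rw [norm_smul, Real.norm_of_nonneg (by positivity)]
    exact mul_le_of_le_one_left (norm_nonneg _) ((div_le_one ha).2 (le_max_left _ _))
  calc ‖radialRetraction R x - radialRetraction R y‖
      = ‖(R / a) • (x - y) + (R / a - R / b) • y‖ := by
        simp only [radialRetraction, a, b, smul_sub, sub_smul]; abel_nf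
    _ ≤ ‖x - y‖ + ‖x - y‖ := norm_add_le_of_le hshrink (by rwa [norm_smul, Real.norm_eq_abs])
    _ = 2 * ‖x - y‖ := by ring

end RadialRetraction

section IntegralSolution

variable {E : Type*} [NormedAddCommGroup E] [NormedSpace ℝ E]

/-- `u` is a Carathéodory solution of `u' = f(t,u)` on `[a, b]`. -/
def IsIntegralSolutionOn (f : ℝ → E → E) (u : ℝ → E) (a b : ℝ) : Prop :=
  IntegrableOn (fun s => f s (u s)) (Icc a b) ∧
    ∀ t ∈ Icc a b, u t = u a + ∫ s in a..t, f s (u s)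

namespace IsIntegralSolutionOn

variable {f g : ℝ → E → E} {u v : ℝ → E} {a b c : ℝ}

theorem _root_.isIntegralSolutionOn_self (f : ℝ → E → E) (u : ℝ → E) (a : ℝ) :
    IsIntegralSolutionOn f u a a := by
  refine ⟨by simp, fun t ht => ?_⟩
  rw [Icc_self, mem_singleton_iff] at ht
  simp [ht]

theorem mono (h : IsIntegralSolutionOn f u a b) (hc : c ≤ b) : IsIntegralSolutionOn f u a c :=
  ⟨h.1.mono_set (Icc_subset_Icc_right hc), fun t ht => h.2 t ⟨ht.1, ht.2.trans hc⟩⟩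

theorem congr (h : IsIntegralSolutionOn f u a b) (huv : EqOn u v (Icc a b)) :
    IsIntegralSolutionOn f v a b := by
  have hfuv : EqOn (fun s => f s (u s)) (fun s => f s (v s)) (Icc a b) := fun s hs => by
    simp only [huv hs]
  refine ⟨h.1.congr_fun hfuv measurableSet_Icc, fun t ht => ?_⟩
  have hat : uIcc a t ⊆ Icc a b := uIcc_of_le ht.1 ▸ Icc_subset_Icc_right ht.2
  rw [← huv ht, ← huv ⟨le_rfl, ht.1.trans ht.2⟩, h.2 t ht, integral_congr (hfuv.mono hat)]

theorem congr_field (h : IsIntegralSolutionOn g u a b)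
    (hgf : EqOn (fun s => g s (u s)) (fun s => f s (u s)) (Icc a b)) :
    IsIntegralSolutionOn f u a b := by
  refine ⟨h.1.congr_fun hgf measurableSet_Icc, fun t ht => ?_⟩
  have hat : uIcc a t ⊆ Icc a b := uIcc_of_le ht.1 ▸ Icc_subset_Icc_right ht.2
  rw [h.2 t ht, integral_congr (hgf.mono hat)]

theorem append (hu : IsIntegralSolutionOn f u a b) (hv : IsIntegralSolutionOn f v b c)
    (hab : a ≤ b) (hbc : b ≤ c) (hvu : v b = u b) :
    IsIntegralSolutionOn f (fun t => if t ≤ b then u t else v t) a c := by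
  set w := fun t => if t ≤ b then u t else v t
  have hwu : EqOn u w (Icc a b) := fun t ht => (if_pos ht.2).symm
  have hwv : EqOn v w (Icc b c) := fun t ht => by
    rcases ht.1.eq_or_lt with rfl | hbt
    · simp [w, hvu]
    · exact (if_neg (not_le.2 hbt)).symm
  replace hu := hu.congr hwu
  replace hv := hv.congr hwv
  refine ⟨Icc_union_Icc_eq_Icc hab hbc ▸ hu.1.union hv.1, fun t ht => ?_⟩
  rcases le_total t b with htb | hbt
  · exact hu.2 t ⟨ht.1, htb⟩
  · rw [hv.2 t ⟨hbt, ht.2⟩, hu.2 b ⟨hab, le_rfl⟩, add_assoc,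
      integral_add_adjacent_intervals ((intervalIntegrable_iff_integrableOn_Icc_of_le hab).2 hu.1)
        ((intervalIntegrable_iff_integrableOn_Icc_of_le hbt).2
          (hv.1.mono_set (Icc_subset_Icc_right ht.2)))]

end IsIntegralSolutionOn

theorem exists_isIntegralSolutionOn_of_uniform_step {f : ℝ → E → E} {τ : ℝ} (hτ : 0 < τ)
    (t₀ : ℝ) (step : ∀ t₁ ≥ t₀, ∀ x : E, ∃ v : ℝ → E, v t₁ = x ∧
      IsIntegralSolutionOn f v t₁ (t₁ + τ)) (x₀ : E) :
    ∃ u : ℝ → E, u t₀ = x₀ ∧ ∀ t ≥ t₀, IsIntegralSolutionOn f u t₀ t := by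
  choose v hv₀ hv using step
  set T : ℕ → ℝ := fun k => t₀ + k * τ
  have hT : ∀ k, t₀ ≤ T k := fun k => le_add_of_nonneg_right (by positivity)
  have hT_mono : Monotone T := fun j k hjk => by simp only [T]; gcongr
  let w : ℕ → ℝ → E := fun k => Nat.rec (fun _ => x₀)
    (fun k wk t => if t ≤ T k then wk t else v (T k) (hT k) (wk (T k)) t) k
  have hw_succ : ∀ k t, w (k + 1) t = if t ≤ T k then w k t else v (T k) (hT k) (w k (T k)) t :=
    fun _ _ => rfl
  have hw_sol : ∀ k, w k t₀ = x₀ ∧ IsIntegralSolutionOn f (w k) t₀ (T k) := by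
    intro k
    induction k with
    | zero => exact ⟨rfl, by simpa [T] using isIntegralSolutionOn_self f (w 0) t₀⟩
    | succ k ih =>
      refine ⟨by rw [hw_succ, if_pos (hT k), ih.1], ?_⟩
      have hTk : T (k + 1) = T k + τ := by simp only [T]; push_cast; ring
      rw [hTk]
      exact ih.2.append (hv _ _ _) (hT k) (by linarith) (hv₀ _ _ _)
  have hw_stable : ∀ j k, j ≤ k → EqOn (w k) (w j) (Iic (T j)) := by
    intro j k hjk
    induction k, hjk using Nat.le_induction with
    | base => exact eqOn_refl _ _
    | succ k hjk ih =>
      intro t ht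
      rw [hw_succ, if_pos (mem_Iic.1 ht |>.trans (hT_mono hjk))]
      exact ih ht
  set idx : ℝ → ℕ := fun t => ⌈(t - t₀) / τ⌉₊
  have hle_T : ∀ t, t ≤ T (idx t) := fun t => by
    have := (div_le_iff₀ hτ).1 (Nat.le_ceil ((t - t₀) / τ))
    simp only [T, idx]; linarith
  exact ⟨fun t => w (idx t) t, by simp [idx, (hw_sol 0).1], fun t _ =>
    ((hw_sol (idx t)).2.mono (hle_T t)).congr fun s hs =>
      hw_stable _ _ (Nat.ceil_mono (by gcongr; exact hs.2)) (hle_T s)⟩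

end IntegralSolution

theorem summable_mul_pow_mul_pow_succ_div_factorial {M L τ : ℝ} (hM : 0 ≤ M) (hL : 0 ≤ L)
    (hτ : 0 ≤ τ) : Summable fun k : ℕ => M * L ^ k * τ ^ (k + 1) / (k + 1).factorial := by
  refine .of_nonneg_of_le (fun k => by positivity) (fun k => ?_)
    ((Real.summable_pow_div_factorial (L * τ)).mul_left (M * τ))
  calc M * L ^ k * τ ^ (k + 1) / (k + 1).factorial ≤ M * L ^ k * τ ^ (k + 1) / k.factorial := by
        gcongr
        exact k.le_succ
    _ = M * τ * ((L * τ) ^ k / k.factorial) := by ring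

theorem integral_mul_exp_mul_sub (K A a t : ℝ) :
    ∫ s in a..t, K * (A * Real.exp (K * (s - a))) = A * (Real.exp (K * (t - a)) - 1) := by
  have hderiv : ∀ s, HasDerivAt (fun s => A * Real.exp (K * (s - a)))
      (K * (A * Real.exp (K * (s - a)))) s := fun s =>
    ((((hasDerivAt_id s).sub_const a).const_mul K).exp.const_mul A).congr_deriv (by simp; ring)
  rw [integral_eq_sub_of_hasDerivAt (fun s _ => hderiv s)
    (Continuous.intervalIntegrable (by fun_prop) _ _)]
  simp only [sub_self, mul_zero, Real.exp_zero]
  ring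

section Picard

variable {E : Type*} [NormedAddCommGroup E] [MeasurableSpace E]

structure IsBoundedLipschitzField (g : ℝ → E → E) (L : ℝ≥0) (M : ℝ) : Prop where
  measurable : ∀ x, Measurable (g · x)
  lipschitzWith : ∀ s, LipschitzWith L (g s)
  norm_le : ∀ s x, ‖g s x‖ ≤ M

variable [BorelSpace E] [SecondCountableTopology E] {g : ℝ → E → E} {L : ℝ≥0} {M : ℝ}

theorem IsBoundedLipschitzField.measurable_comp (hg : IsBoundedLipschitzField g L M)
    {u : ℝ → E} (hu : Measurable u) : Measurable fun s => g s (u s) :=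
  (measurable_uncurry_of_continuous_of_measurable (fun s => (hg.lipschitzWith s).continuous)
    hg.measurable).comp (hu.prodMk measurable_id)

theorem IsBoundedLipschitzField.intervalIntegrable_comp (hg : IsBoundedLipschitzField g L M)
    {u : ℝ → E} (hu : Measurable u) (a b : ℝ) :
    IntervalIntegrable (fun s => g s (u s)) volume a b :=
  (intervalIntegrable_const (c := M)).mono_fun (hg.measurable_comp hu).aestronglyMeasurable
    (Eventually.of_forall fun s => (hg.norm_le s (u s)).trans (le_abs_self M))

variable [NormedSpace ℝ E] {K c a t : ℝ} {x : E}

noncomputable def picardIter (g : ℝ → E → E) (a : ℝ) (x : E) : ℕ → ℝ → E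
  | 0 => fun _ => x
  | k + 1 => fun t => x + ∫ s in a..t, g s (picardIter g a x k s)

namespace IsBoundedLipschitzField

theorem measurable_picardIter (hg : IsBoundedLipschitzField g L M) (k : ℕ) :
    Measurable (picardIter g a x k) := by
  induction k with
  | zero => exact measurable_const
  | succ k ih =>
    exact (continuous_const.add
      (continuous_primitive (hg.intervalIntegrable_comp ih) a)).measurable

theorem picardIter_succ_sub (hg : IsBoundedLipschitzField g L M) (k : ℕ) (t : ℝ) :
    picardIter g a x (k + 2) t - picardIter g a x (k + 1) t =
      ∫ s in a..t, (g s (picardIter g a x (k + 1) s) - g s (picardIter g a x k s)) := by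
  rw [integral_sub (hg.intervalIntegrable_comp (hg.measurable_picardIter _) a t)
    (hg.intervalIntegrable_comp (hg.measurable_picardIter _) a t)]
  simp only [picardIter]
  abel

theorem norm_picardIter_succ_sub_le (hg : IsBoundedLipschitzField g L M) (ht : a ≤ t) (k : ℕ) :
    ‖picardIter g a x (k + 1) t - picardIter g a x k t‖ ≤
      M * L ^ k * (t - a) ^ (k + 1) / (k + 1).factorial := by
  induction k generalizing t with
  | zero =>
    simpa [picardIter, abs_of_nonneg (sub_nonneg.2 ht)] using
      norm_integral_le_of_norm_le_const (a := a) (b := t) fun s _ => hg.norm_le s x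
  | succ k ih =>
    have hpointwise : ∀ s ∈ Ioc a t,
        ‖g s (picardIter g a x (k + 1) s) - g s (picardIter g a x k s)‖ ≤
          L * (M * L ^ k / (k + 1).factorial) * (s - a) ^ (k + 1) := fun s hs =>
      calc _ ≤ L * ‖picardIter g a x (k + 1) s - picardIter g a x k s‖ :=
            (hg.lipschitzWith s).norm_sub_le _ _
        _ ≤ L * (M * L ^ k * (s - a) ^ (k + 1) / (k + 1).factorial) := by
            gcongr; exact ih hs.1.le
        _ = _ := by ring
    rw [hg.picardIter_succ_sub]
    refine (norm_integral_le_of_norm_le ht (Eventually.of_forall hpointwise)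
      (Continuous.intervalIntegrable (by fun_prop) _ _)).trans_eq ?_
    rw [intervalIntegral.integral_const_mul, integral_comp_sub_right (fun s => s ^ (k + 1)),
      sub_self, integral_pow, Nat.factorial_succ (k + 1)]
    push_cast
    field_simp
    ring

theorem norm_picardIter_add_le (hg : IsBoundedLipschitzField g L M) (hK : 0 ≤ K) (hc : 0 ≤ c)
    (hgrowth : ∀ s y, ‖g s y‖ ≤ K * (‖y‖ + c)) (ht : a ≤ t) (k : ℕ) :
    ‖picardIter g a x k t‖ + c ≤ (‖x‖ + c) * Real.exp (K * (t - a)) := by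
  induction k generalizing t with
  | zero =>
    exact le_mul_of_one_le_right (by positivity)
      (Real.one_le_exp (mul_nonneg hK (sub_nonneg.2 ht)))
  | succ k ih =>
    have hint := hg.intervalIntegrable_comp (hg.measurable_picardIter (a := a) (x := x) k) a t
    calc ‖picardIter g a x (k + 1) t‖ + c
        ≤ ‖x‖ + c + ∫ s in a..t, ‖g s (picardIter g a x k s)‖ := by
          have := intervalIntegral.norm_integral_le_integral_norm
            (f := fun s => g s (picardIter g a x k s)) (μ := volume) ht
          have := norm_add_le x (∫ s in a..t, g s (picardIter g a x k s))
          simp only [picardIter]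
          linarith
      _ ≤ ‖x‖ + c + ∫ s in a..t, K * ((‖x‖ + c) * Real.exp (K * (s - a))) := by
          gcongr
          refine integral_mono_on ht hint.norm (Continuous.intervalIntegrable (by fun_prop) _ _)
            fun s hs => (hgrowth s _).trans ?_
          gcongr
          exact ih hs.1
      _ = (‖x‖ + c) * Real.exp (K * (t - a)) := by
          rw [integral_mul_exp_mul_sub]
          ring

end IsBoundedLipschitzField

variable [CompleteSpace E]

noncomputable def picardLimit (g : ℝ → E → E) (a : ℝ) (x : E) (t : ℝ) : E :=
  limUnder atTop fun k => picardIter g a x k t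

namespace IsBoundedLipschitzField

theorem tendsto_picardIter (hg : IsBoundedLipschitzField g L M) (ht : a ≤ t) :
    Tendsto (fun k => picardIter g a x k t) atTop (𝓝 (picardLimit g a x t)) := by
  have hM : 0 ≤ M := (norm_nonneg _).trans (hg.norm_le a x)
  refine tendsto_nhds_limUnder <| cauchySeq_tendsto_of_complete <|
    cauchySeq_of_dist_le_of_summable _ (fun k => ?_)
      (summable_mul_pow_mul_pow_succ_div_factorial hM L.coe_nonneg (sub_nonneg.2 ht))
  rw [dist_comm, dist_eq_norm]
  exact hg.norm_picardIter_succ_sub_le ht k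

theorem measurable_picardLimit (hg : IsBoundedLipschitzField g L M) :
    Measurable (picardLimit g a x) :=
  (StronglyMeasurable.limUnder fun k =>
    (hg.measurable_picardIter k).stronglyMeasurable).measurable

theorem picardLimit_eq (hg : IsBoundedLipschitzField g L M) (ht : a ≤ t) :
    picardLimit g a x t = x + ∫ s in a..t, g s (picardLimit g a x s) := by
  have hint : Tendsto (fun k => ∫ s in a..t, g s (picardIter g a x k s)) atTop
      (𝓝 (∫ s in a..t, g s (picardLimit g a x s))) := by
    refine tendsto_integral_filter_of_dominated_convergence (fun _ => M)
      (Eventually.of_forall fun k =>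
        (hg.measurable_comp (hg.measurable_picardIter k)).aestronglyMeasurable)
      (Eventually.of_forall fun k => Eventually.of_forall fun s _ => hg.norm_le _ _)
      intervalIntegrable_const (Eventually.of_forall fun s hs => ?_)
    rw [uIoc_of_le ht] at hs
    exact ((hg.lipschitzWith s).continuous.tendsto _).comp (hg.tendsto_picardIter hs.1.le)
  exact tendsto_nhds_unique ((hg.tendsto_picardIter ht).comp (tendsto_add_atTop_nat 1))
    (tendsto_const_nhds.add hint)

theorem picardLimit_self (hg : IsBoundedLipschitzField g L M) : picardLimit g a x a = x := by
  simpa using hg.picardLimit_eq (x := x) le_rfl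

theorem isIntegralSolutionOn_picardLimit (hg : IsBoundedLipschitzField g L M) (b : ℝ) :
    IsIntegralSolutionOn g (picardLimit g a x) a b := by
  refine ⟨?_, fun t ht => by rw [hg.picardLimit_self, ← hg.picardLimit_eq ht.1]⟩
  exact Measure.integrableOn_of_bounded measure_Icc_lt_top.ne
    (hg.measurable_comp hg.measurable_picardLimit).aestronglyMeasurable
    (ae_of_all _ fun s => hg.norm_le _ _)

theorem norm_picardLimit_add_le (hg : IsBoundedLipschitzField g L M)
    (hK : 0 ≤ K) (hc : 0 ≤ c) (hgrowth : ∀ s y, ‖g s y‖ ≤ K * (‖y‖ + c)) (ht : a ≤ t) :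
    ‖picardLimit g a x t‖ + c ≤ (‖x‖ + c) * Real.exp (K * (t - a)) :=
  le_of_tendsto ((hg.tendsto_picardIter ht).norm.add_const c)
    (Eventually.of_forall fun k => hg.norm_picardIter_add_le hK hc hgrowth ht k)

end IsBoundedLipschitzField

end Picard

theorem exists_pos_le_mul_mul_log {F : ℝ → ℝ}
    (h : ∃ C : ℝ, ∀ᶠ R in atTop, F R / (R * Real.log R) ≤ C) :
    ∃ C > 0, ∃ R₀ ≥ 1, ∀ r ≥ R₀, F r ≤ C * (r * Real.log r) := by
  obtain ⟨C, hC⟩ := h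
  obtain ⟨a, ha⟩ := eventually_atTop.1 hC
  refine ⟨max C 1, by positivity, max a 2, le_max_of_le_right one_le_two, fun r hr => ?_⟩
  have hr2 : 2 ≤ r := le_of_max_le_right hr
  have hpos : 0 < r * Real.log r := mul_pos (by linarith) (Real.log_pos (by linarith))
  calc F r ≤ C * (r * Real.log r) := (div_le_iff₀ hpos).1 (ha r (le_of_max_le_left hr))
    _ ≤ max C 1 * (r * Real.log r) := by gcongr; exact le_max_left _ _

theorem norm_le_mul_log_mul_add {E F : Type*} [NormedAddCommGroup E] [NormedAddCommGroup F]
    {φ : E → F} {C R₀ R : ℝ} (hC : 0 ≤ C) (hR₀ : 1 ≤ R₀)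
    (hφ : ∀ r ≥ R₀, ∀ y, ‖y‖ ≤ r → ‖φ y‖ ≤ C * (r * Real.log r)) (hR : R₀ ≤ R)
    {y : E} (hy : ‖y‖ ≤ R) : ‖φ y‖ ≤ C * Real.log R * (‖y‖ + R₀) := by
  set r := max ‖y‖ R₀
  have hr : 1 ≤ r := le_max_of_le_right hR₀
  calc ‖φ y‖ ≤ C * (r * Real.log r) := hφ r (le_max_right _ _) y (le_max_left _ _)
    _ ≤ C * ((‖y‖ + R₀) * Real.log R) := by
        gcongr
        · exact Real.log_nonneg hr
        · exact max_le (by linarith) (by linarith [norm_nonneg y])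
        · exact max_le hy hR
    _ = C * Real.log R * (‖y‖ + R₀) := by ring

section LogGrowth

variable {E : Type*} [NormedAddCommGroup E] [MeasurableSpace E] [BorelSpace E]
  [SecondCountableTopology E] [NormedSpace ℝ E] [CompleteSpace E]

theorem exists_isIntegralSolutionOn_of_log_growth {f : ℝ → E → E} {C R₀ : ℝ} (hC : 0 < C)
    (hR₀ : 1 ≤ R₀) (hmeas : ∀ y, Measurable (f · y))
    (hlip : ∀ R > 0, ∃ L : ℝ≥0, ∀ t ≥ 0, LipschitzOnWith L (f t) (Metric.closedBall 0 R))
    (hgrowth : ∀ r ≥ R₀, ∀ t ≥ 0, ∀ y : E, ‖y‖ ≤ r → ‖f t y‖ ≤ C * (r * Real.log r))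
    {t₁ : ℝ} (ht₁ : 0 ≤ t₁) (x : E) :
    ∃ v : ℝ → E, v t₁ = x ∧ IsIntegralSolutionOn f v t₁ (t₁ + (2 * C)⁻¹) := by
  set R := (‖x‖ + R₀) ^ 2
  have hxR₀ : 1 ≤ ‖x‖ + R₀ := by linarith [norm_nonneg x]
  have hR₀R : R₀ ≤ R := by nlinarith [norm_nonneg x]
  have hR : 0 < R := by positivity
  obtain ⟨L, hL⟩ := hlip R hR
  set K := C * Real.log R
  have hK : 0 ≤ K := mul_nonneg hC.le (Real.log_nonneg (by linarith))
  set g : ℝ → E → E := fun s y => f (max s 0) (radialRetraction R y)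
  have hg_growth : ∀ s y, ‖g s y‖ ≤ K * (‖radialRetraction R y‖ + R₀) := fun s y =>
    norm_le_mul_log_mul_add hC.le hR₀ (hgrowth · · _ (le_max_right s 0)) hR₀R
      (mem_closedBall_zero_iff.1 (radialRetraction_mem_closedBall hR y))
  have hg : IsBoundedLipschitzField g (L * 2) (K * (R + R₀)) :=
    { measurable := fun y => (hmeas _).comp (measurable_id.max measurable_const)
      lipschitzWith := fun s => lipschitzOnWith_univ.1 <|
        (hL _ (le_max_right s 0)).comp (lipschitzWith_radialRetraction hR).lipschitzOnWith
          fun y _ => radialRetraction_mem_closedBall hR y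
      norm_le := fun s y => (hg_growth s y).trans <| by
        gcongr
        exact mem_closedBall_zero_iff.1 (radialRetraction_mem_closedBall hR y) }
  set v := picardLimit g t₁ x
  have hv_le : ∀ t ∈ Icc t₁ (t₁ + (2 * C)⁻¹), ‖v t‖ ≤ R := by
    intro t ht
    have henv := hg.norm_picardLimit_add_le (x := x) hK (zero_le_one.trans hR₀)
      (fun s y => (hg_growth s y).trans (by gcongr; exact norm_radialRetraction_le hR y)) ht.1
    have hKτ : K * (t - t₁) ≤ Real.log (‖x‖ + R₀) :=
      calc K * (t - t₁) ≤ K * (2 * C)⁻¹ := by gcongr; linarith [ht.2]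
        _ = Real.log (‖x‖ + R₀) := by
          simp only [K, R, Real.log_pow]
          field_simp
          ring
    have hexp : Real.exp (K * (t - t₁)) ≤ ‖x‖ + R₀ :=
      (Real.exp_le_exp.2 hKτ).trans_eq (Real.exp_log (by linarith))
    nlinarith
  refine ⟨v, hg.picardLimit_self, (hg.isIntegralSolutionOn_picardLimit _).congr_field
    fun s hs => ?_⟩
  show f (max s 0) (radialRetraction R (v s)) = f s (v s)
  rw [max_eq_left (ht₁.trans hs.1), radialRetraction_of_norm_le hR (hv_le s hs)]

end LogGrowth

theorem ode_global_existence_general (n : ℕ)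
    (f : ℝ → EuclideanSpace ℝ (Fin n) → EuclideanSpace ℝ (Fin n))
    (FL Finf : ℝ → ℝ)
    (hmeas : ∀ R > 0, ∀ u ∈ Metric.closedBall (0 : EuclideanSpace ℝ (Fin n)) R,
      Measurable fun t => f t u)
    (hlip : ∀ R > 0, ∀ t, 0 ≤ t →
      ∀ u₁ ∈ Metric.closedBall (0 : EuclideanSpace ℝ (Fin n)) R,
      ∀ u₂ ∈ Metric.closedBall (0 : EuclideanSpace ℝ (Fin n)) R,
      ‖f t u₁ - f t u₂‖ ≤ FL R * ‖u₁ - u₂‖)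
    (hbdd : ∀ R > 0, ∀ t, 0 ≤ t →
      ∀ u ∈ Metric.closedBall (0 : EuclideanSpace ℝ (Fin n)) R,
      ‖f t u‖ ≤ Finf R)
    (hlimsup : ∃ C : ℝ, ∀ᶠ R in atTop, Finf R / (R * Real.log R) ≤ C)
    (t₀ : ℝ) (ht₀ : 0 ≤ t₀) (u₀ : EuclideanSpace ℝ (Fin n)) :
    ∃ u : ℝ → EuclideanSpace ℝ (Fin n),
      u t₀ = u₀ ∧ ∀ t, t₀ ≤ t → u t = u₀ + ∫ s in t₀..t, f s (u s) := by
  obtain ⟨C, hC, R₀, hR₀, hFinf⟩ := exists_pos_le_mul_mul_log hlimsup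
  have hmeas' : ∀ y, Measurable (f · y) := fun y =>
    hmeas (‖y‖ + 1) (by positivity) y (mem_closedBall_zero_iff.2 (by linarith))
  have hlip' : ∀ R > 0, ∃ L : ℝ≥0, ∀ t ≥ 0, LipschitzOnWith L (f t) (Metric.closedBall 0 R) :=
    fun R hR => ⟨(FL R).toNNReal, fun t ht => .of_dist_le_mul fun y hy z hz => by
      rw [dist_eq_norm, dist_eq_norm]
      exact (hlip R hR t ht y hy z hz).trans (by gcongr; exact Real.le_coe_toNNReal _)⟩
  have hgrowth : ∀ r ≥ R₀, ∀ t ≥ 0, ∀ y, ‖y‖ ≤ r → ‖f t y‖ ≤ C * (r * Real.log r) :=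
    fun r hr t ht y hy => (hbdd r (by linarith) t ht y (mem_closedBall_zero_iff.2 hy)).trans
      (hFinf r hr)
  obtain ⟨u, hu₀, hu⟩ := exists_isIntegralSolutionOn_of_uniform_step (by positivity) t₀
    (fun t₁ ht₁ => exists_isIntegralSolutionOn_of_log_growth hC hR₀ hmeas' hlip' hgrowth
      (ht₀.trans ht₁)) u₀
  exact ⟨u, hu₀, fun t ht => hu₀ ▸ (hu t ht).2 t ⟨ht, le_rfl⟩⟩

/-- Global existence for `u' = f(t,u)` when, for each `R`, `f` is measurable in
time, `F_L(R)`-Lipschitz and bounded by `F_∞(R)` on the ball of radius `R`, and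
`limsup_{R→∞} F_∞(R)/(R ln R) < ∞`: through every initial datum there is a
global Carathéodory solution on `[t₀, ∞)`. -/
theorem ode_global_existence (n : ℕ)
    (f : ℝ → EuclideanSpace ℝ (Fin n) → EuclideanSpace ℝ (Fin n))
    (FL Finf : ℝ → ℝ)
    (hmeas : ∀ R > 0, ∀ u ∈ Metric.closedBall (0 : EuclideanSpace ℝ (Fin n)) R,
      Measurable fun t => f t u)
    (hlip : ∀ R > 0, ∀ t, 0 ≤ t →
      ∀ u₁ ∈ Metric.closedBall (0 : EuclideanSpace ℝ (Fin n)) R,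
      ∀ u₂ ∈ Metric.closedBall (0 : EuclideanSpace ℝ (Fin n)) R,
      ‖f t u₁ - f t u₂‖ ≤ FL R * ‖u₁ - u₂‖)
    (hbdd : ∀ R > 0, ∀ t, 0 ≤ t →
      ∀ u ∈ Metric.closedBall (0 : EuclideanSpace ℝ (Fin n)) R,
      ‖f t u‖ ≤ Finf R)
    (hFinfpos : ∀ R > 0, 0 < Finf R)
    (hlimsup : ∃ C : ℝ, ∀ᶠ R in atTop, Finf R / (R * Real.log R) ≤ C)
    (t₀ : ℝ) (ht₀ : 0 ≤ t₀) (u₀ : EuclideanSpace ℝ (Fin n)) :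
    ∃ u : ℝ → EuclideanSpace ℝ (Fin n),
      u t₀ = u₀ ∧ ∀ t, t₀ ≤ t → u t = u₀ + ∫ s in t₀..t, f s (u s) :=
  ode_global_existence_general n f FL Finf hmeas hlip hbdd hlimsup t₀ ht₀ u₀
end
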